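/- arXiv:1909.12751 — 2 statements merged into one kernel-verified Lean document; each statement's English description precedes it below -/
import Mathlib

section
/- (1) For any smooth f : S → ℍ, the function (∂F/∂ν − ⟨ν, 𝔇̄F⟩)|_S is the same for every smooth extension F of f to a neighborhood of S; this common value is f^⊥. (2) If f is CRF and F is a smooth extension of f with 𝔇̄F = 0 at every point of S, then ∂F/∂ν = f^⊥ on S, and (∂F/∂x_α)|_S = f_{(x_α)}, (∂F/∂y_α)|_S = f_{(y_α)} for α = 0,1,2,3. -/
/-!
Quaternionic analysis in two variables: the Cauchy–Riemann–Fueter operator,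
CRF functions and admissible functions on a hypersurface `S ⊂ ℍ²`.
-/

noncomputable section

open Set

/-- The quaternions. -/
local notation "ℍ" => Quaternion ℝ

/-- `ℍ²`. -/
abbrev E : Type := ℍ × ℍ

/-- The real basis `1, i, j, k` of `ℍ`. -/
def e : Fin 4 → ℍ := ![1, ⟨0,1,0,0⟩, ⟨0,0,1,0⟩, ⟨0,0,0,1⟩]

/-- The coordinate directions of the first quaternionic variable. -/
def e1 (α : Fin 4) : E := (e α, 0)

/-- The coordinate directions of the second quaternionic variable. -/
def e2 (α : Fin 4) : E := (0, e α)

/-- The Euclidean scalar product of `ℍ ≅ ℝ⁴`. -/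
def qdot (p q : ℍ) : ℝ := (star p * q).re

/-- The Euclidean scalar product of `ℍ² ≅ ℝ⁸`. -/
def edot (p q : E) : ℝ := qdot p.1 q.1 + qdot p.2 q.2

/-- The quaternionic scalar product `⟨p,r⟩ = p̄₁r₁ + p̄₂r₂` on `ℍ²`. -/
def qinner (p r : E) : ℍ := star p.1 * r.1 + star p.2 * r.2

/-- `∂F/∂q̄₁ = Σ_α i_α ∂F/∂x_α`. -/
def dbar1 (F : E → ℍ) : E → ℍ := fun p => ∑ α, e α * fderiv ℝ F p (e1 α)

/-- `∂F/∂q̄₂ = Σ_α i_α ∂F/∂y_α`. -/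
def dbar2 (F : E → ℍ) : E → ℍ := fun p => ∑ α, e α * fderiv ℝ F p (e2 α)

/-- `∂F/∂q₁ = Σ_α ī_α ∂F/∂x_α`. -/
def d1 (F : E → ℍ) : E → ℍ := fun p => ∑ α, star (e α) * fderiv ℝ F p (e1 α)

/-- `∂F/∂q₂ = Σ_α ī_α ∂F/∂y_α`. -/
def d2 (F : E → ℍ) : E → ℍ := fun p => ∑ α, star (e α) * fderiv ℝ F p (e2 α)

/-- The Cauchy–Riemann–Fueter operator `𝔇̄F = (∂F/∂q̄₁, ∂F/∂q̄₂)`. -/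
def Dbar (F : E → ℍ) : E → E := fun p => (dbar1 F p, dbar2 F p)

/-- `Δ₁`, the Laplacian in the variables `x₀,…,x₃`. -/
def lap1 (F : E → ℍ) : E → ℍ :=
  fun p => ∑ α, fderiv ℝ (fun x => fderiv ℝ F x (e1 α)) p (e1 α)

/-- `Δ₂`, the Laplacian in the variables `y₀,…,y₃`. -/
def lap2 (F : E → ℍ) : E → ℍ :=
  fun p => ∑ α, fderiv ℝ (fun x => fderiv ℝ F x (e2 α)) p (e2 α)

/-- The Euclidean gradient `∇ρ` of a real valued function on `ℍ² ≅ ℝ⁸`. -/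
def grad (ρ : E → ℝ) (p : E) : E :=
  (∑ α, fderiv ℝ ρ p (e1 α) • e α, ∑ α, fderiv ℝ ρ p (e2 α) • e α)

/-- The unit normal `ν = ∇ρ/|∇ρ|` of `S = {ρ = 0}`. -/
def nu (ρ : E → ℝ) (p : E) : E :=
  (Real.sqrt (edot (grad ρ p) (grad ρ p)))⁻¹ • grad ρ p

/-- `F` is a smooth extension of `f : S → ℍ` to an open neighborhood of `S`. -/
def SmoothExt (S : Set E) (f F : E → ℍ) : Prop :=
  ∃ U : Set E, IsOpen U ∧ S ⊆ U ∧ ContDiffOn ℝ (⊤:ℕ∞) F U ∧ EqOn F f S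

/-- `f : S → ℍ` is smooth (it admits a smooth extension near `S`). -/
def SmoothOnS (S : Set E) (f : E → ℍ) : Prop := ∃ F, SmoothExt S f F

/-- `f : S → ℍ` is a CRF function: some smooth extension `F` of `f`
satisfies `𝔇̄F = 0` at every point of `S`. -/
def IsCRF (S : Set E) (f : E → ℍ) : Prop :=
  ∃ F, SmoothExt S f F ∧ ∀ p ∈ S, dbar1 F p = 0 ∧ dbar2 F p = 0

/-- The expression `∂F/∂ν − ⟨ν, 𝔇̄F⟩` defining `f^⊥` through the extension `F`. -/
def perpOf (ρ : E → ℝ) (F : E → ℍ) (p : E) : ℍ :=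
  fderiv ℝ F p (nu ρ p) - qinner (nu ρ p) (Dbar F p)

/-- `f_{(x_α)} = τ_{x_α}(f) + (∂/∂x_α, ν) f^⊥`, computed through the extension `F`. -/
def fx (ρ : E → ℝ) (F : E → ℍ) (α : Fin 4) (p : E) : ℍ :=
  fderiv ℝ F p (e1 α - edot (e1 α) (nu ρ p) • nu ρ p)
    + edot (e1 α) (nu ρ p) • perpOf ρ F p

/-- `f_{(y_α)} = τ_{y_α}(f) + (∂/∂y_α, ν) f^⊥`, computed through the extension `F`. -/
def fy (ρ : E → ℝ) (F : E → ℍ) (α : Fin 4) (p : E) : ℍ :=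
  fderiv ℝ F p (e2 α - edot (e2 α) (nu ρ p) • nu ρ p)
    + edot (e2 α) (nu ρ p) • perpOf ρ F p

/-- `f_{(q̄₁)} = Σ_α i_α f_{(x_α)}`. -/
def fq1bar (ρ : E → ℝ) (F : E → ℍ) (p : E) : ℍ := ∑ α, e α * fx ρ F α p

/-- `f_{(q̄₂)} = Σ_α i_α f_{(y_α)}`. -/
def fq2bar (ρ : E → ℝ) (F : E → ℍ) (p : E) : ℍ := ∑ α, e α * fy ρ F α p

/-- `f` is admissible: `f` is CRF and the eight functions
`f_{(x_α)}, f_{(y_α)}` (`α = 0,1,2,3`) are CRF. -/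
def Admissible (ρ : E → ℝ) (S : Set E) (f : E → ℍ) : Prop :=
  IsCRF S f ∧ ∀ F, SmoothExt S f F →
    ∀ α : Fin 4, IsCRF S (fx ρ F α) ∧ IsCRF S (fy ρ F α)

/-- `∂F/∂ρ`, the derivative along the vector field `∇ρ/|∇ρ|²`. -/
def drho (ρ : E → ℝ) (F : E → ℍ) : E → ℍ :=
  fun p => fderiv ℝ F p ((edot (grad ρ p) (grad ρ p))⁻¹ • grad ρ p)

/-- The iterated derivative `∂^k F/∂ρ^k`. -/
def drhoIter (ρ : E → ℝ) : ℕ → (E → ℍ) → (E → ℍ)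
  | 0 => fun F => F
  | (k+1) => fun F => drho ρ (drhoIter ρ k F)

/-!
Two smooth extensions `F`, `G` of `f` agree on `S = {ρ = 0}`, so by the Lagrange multiplier
theorem their differentials agree on `ker dρ`; hence `dF = dG + dρ ⊗ c` for some `c ∈ ℍ`. Such a
rank-one term changes both `∂F/∂ν` and `⟨ν, 𝔇̄F⟩` by `|∇ρ| c`, which gives (1). If `𝔇̄F = 0` on
`S`, then `f^⊥ = ∂F/∂ν`, and splitting `∂/∂x_α` into its tangential part, where `F` and any other
extension agree, and its normal part `(∂/∂x_α, ν) ν` gives (2).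
-/

open Filter Topology

theorem HasStrictFDerivAt.apply_eq_zero_of_eventually_const_on_levelSet
    {X Y : Type*} [NormedAddCommGroup X] [NormedSpace ℝ X] [CompleteSpace X]
    [NormedAddCommGroup Y] [NormedSpace ℝ Y]
    {ρ : X → ℝ} {ρ' : X →L[ℝ] ℝ} {H : X → Y} {H' : X →L[ℝ] Y} {x₀ : X}
    (hρ : HasStrictFDerivAt ρ ρ' x₀) (hρ' : ρ' ≠ 0) (hH : HasStrictFDerivAt H H' x₀)
    (hconst : ∀ᶠ x in 𝓝[{x | ρ x = ρ x₀}] x₀, H x = H x₀) {v : X} (hv : ρ' v = 0) :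
    H' v = 0 := by
  refine SeparatingDual.eq_zero_of_forall_dual_eq_zero (R := ℝ) fun ℓ => ?_
  have hextr : IsLocalExtrOn (ℓ ∘ H) {x | ρ x = ρ x₀} x₀ :=
    Or.inl (hconst.mono fun x hx => by simp [hx])
  obtain ⟨a, b, hab, hlin⟩ :=
    hextr.exists_multipliers_of_hasStrictFDerivAt_1d hρ (ℓ.hasStrictFDerivAt.comp x₀ hH)
  have hb : b ≠ 0 := by
    rintro rfl
    have ha : a ≠ 0 := by simpa using hab
    exact hρ' (by simpa [ha] using hlin)
  simpa [hv, hb] using congrArg (· v) hlin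

theorem ContinuousLinearMap.exists_eq_add_smulRight_of_eqOn_ker
    {𝕜 X Y : Type*} [NontriviallyNormedField 𝕜] [NormedAddCommGroup X] [NormedSpace 𝕜 X]
    [NormedAddCommGroup Y] [NormedSpace 𝕜 Y] {A B : X →L[𝕜] Y} {L : X →L[𝕜] 𝕜}
    (hL : L ≠ 0) (h : ∀ v, L v = 0 → A v = B v) : ∃ c : Y, A = B + L.smulRight c := by
  obtain ⟨u, hu⟩ : ∃ u, L u ≠ 0 := by
    by_contra! h0
    exact hL (ContinuousLinearMap.ext h0)
  refine ⟨(L u)⁻¹ • (A u - B u), ContinuousLinearMap.ext fun w => ?_⟩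
  have hker := h (w - (L w / L u) • u) (by simp [hu])
  simp only [map_sub, map_smul] at hker
  simp only [add_apply, smulRight_apply]
  linear_combination (norm := module) hker

@[simp] lemma re_e (α : Fin 4) : (e α).re = ![1, 0, 0, 0] α := by fin_cases α <;> rfl
@[simp] lemma imI_e (α : Fin 4) : (e α).imI = ![0, 1, 0, 0] α := by fin_cases α <;> rfl
@[simp] lemma imJ_e (α : Fin 4) : (e α).imJ = ![0, 0, 1, 0] α := by fin_cases α <;> rfl
@[simp] lemma imK_e (α : Fin 4) : (e α).imK = ![0, 0, 0, 1] α := by fin_cases α <;> rfl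

lemma sum_qdot_e_smul_e (w : ℍ) : ∑ α, qdot (e α) w • e α = w := by
  ext <;> simp [qdot, Fin.sum_univ_four]

lemma sum_qdot_smul_e1_add_sum_qdot_smul_e2 (w : E) :
    (∑ α, qdot (e α) w.1 • e1 α) + ∑ α, qdot (e α) w.2 • e2 α = w := by
  ext <;> simp [e1, e2, Prod.fst_sum, Prod.snd_sum, sum_qdot_e_smul_e]

lemma edot_grad (ρ : E → ℝ) (p w : E) : edot (grad ρ p) w = fderiv ℝ ρ p w := by
  conv_rhs => rw [← sum_qdot_smul_e1_add_sum_qdot_smul_e2 w]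
  simp [edot, grad, qdot, Fin.sum_univ_four]
  ring

lemma edot_comm (p q : E) : edot p q = edot q p := by
  simp only [edot, qdot, Quaternion.re_mul, Quaternion.re_star, Quaternion.imI_star,
    Quaternion.imJ_star, Quaternion.imK_star]
  ring

lemma edot_smul_right (s : ℝ) (p q : E) : edot p (s • q) = s * edot p q := by
  simp [edot, qdot, mul_add]

lemma qdot_self (q : ℍ) : qdot q q = Quaternion.normSq q := by
  rw [qdot, Quaternion.star_mul_self, Quaternion.re_coe]

lemma edot_self_pos {g : E} (hg : g ≠ 0) : 0 < edot g g := by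
  have h1 : 0 ≤ Quaternion.normSq g.1 := Quaternion.normSq_nonneg
  have h2 : 0 ≤ Quaternion.normSq g.2 := Quaternion.normSq_nonneg
  rw [edot, qdot_self, qdot_self]
  by_contra! hle
  have hg1 : g.1 = 0 := Quaternion.normSq_eq_zero.1 (by linarith)
  have hg2 : g.2 = 0 := Quaternion.normSq_eq_zero.1 (by linarith)
  exact hg (Prod.ext hg1 hg2)

lemma qinner_smul_mul (s : ℝ) (g : E) (c : ℍ) :
    qinner (s • g) (g.1 * c, g.2 * c) = (s * edot g g) • c := by
  simp only [qinner, Prod.smul_fst, Prod.smul_snd, Quaternion.star_smul, smul_mul_assoc,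
    ← mul_assoc, Quaternion.star_mul_self, Quaternion.coe_mul_eq_smul, edot, qdot_self]
  rw [← smul_add, ← add_smul, smul_smul]

lemma sum_e_mul_fderiv_e1_smul (ρ : E → ℝ) (p : E) (c : ℍ) :
    ∑ α, e α * (fderiv ℝ ρ p (e1 α) • c) = (grad ρ p).1 * c := by
  simp [grad, Finset.sum_mul]

lemma sum_e_mul_fderiv_e2_smul (ρ : E → ℝ) (p : E) (c : ℍ) :
    ∑ α, e α * (fderiv ℝ ρ p (e2 α) • c) = (grad ρ p).2 * c := by
  simp [grad, Finset.sum_mul]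

lemma fderiv_nu (ρ : E → ℝ) (p : E) :
    fderiv ℝ ρ p (nu ρ p) = (√(edot (grad ρ p) (grad ρ p)))⁻¹ * edot (grad ρ p) (grad ρ p) := by
  rw [nu, map_smul, ← edot_grad ρ p (grad ρ p), smul_eq_mul]

lemma edot_nu (ρ : E → ℝ) (p w : E) :
    edot w (nu ρ p) = (√(edot (grad ρ p) (grad ρ p)))⁻¹ * fderiv ℝ ρ p w := by
  rw [nu, edot_smul_right, edot_comm w, edot_grad ρ p w]

lemma fderiv_sub_edot_nu_smul_nu {ρ : E → ℝ} {p : E} (hg : grad ρ p ≠ 0) (w : E) :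
    fderiv ℝ ρ p (w - edot w (nu ρ p) • nu ρ p) = 0 := by
  have ht := edot_self_pos hg
  have hs : (√(edot (grad ρ p) (grad ρ p)))⁻¹ ^ 2 * edot (grad ρ p) (grad ρ p) = 1 := by
    rw [inv_pow, Real.sq_sqrt ht.le, inv_mul_cancel₀ ht.ne']
  rw [map_sub, map_smul, fderiv_nu, edot_nu, smul_eq_mul]
  linear_combination -fderiv ℝ ρ p w * hs

lemma perpOf_eq_of_fderiv_eq_add_smulRight {ρ : E → ℝ} {F G : E → ℍ} {p : E} {c : ℍ}
    (h : fderiv ℝ F p = fderiv ℝ G p + (fderiv ℝ ρ p).smulRight c) :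
    perpOf ρ F p = perpOf ρ G p := by
  have hDbar : Dbar F p = Dbar G p + ((grad ρ p).1 * c, (grad ρ p).2 * c) := by
    simp only [Dbar, dbar1, dbar2, h, add_apply, ContinuousLinearMap.smulRight_apply, mul_add,
      Finset.sum_add_distrib, sum_e_mul_fderiv_e1_smul, sum_e_mul_fderiv_e2_smul, Prod.mk_add_mk]
  have hqinner : qinner (nu ρ p) (Dbar F p)
      = qinner (nu ρ p) (Dbar G p) + fderiv ℝ ρ p (nu ρ p) • c := by
    rw [hDbar, fderiv_nu, ← qinner_smul_mul]
    simp only [qinner, nu, Prod.fst_add, Prod.snd_add, mul_add]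
    abel
  rw [perpOf, perpOf, hqinner, h, add_apply, ContinuousLinearMap.smulRight_apply]
  abel

structure IsRegularLevelSetAt (ρ : E → ℝ) (S : Set E) (p : E) : Prop where
  mem : p ∈ S
  hasStrictFDerivAt : HasStrictFDerivAt ρ (fderiv ℝ ρ p) p
  grad_ne_zero : grad ρ p ≠ 0
  eventually_mem : ∀ᶠ x in 𝓝[{x | ρ x = ρ p}] p, x ∈ S

lemma isRegularLevelSetAt_of_mem {Ω : Set E} (hΩ : IsOpen Ω) {ρ : E → ℝ}
    (hρ : ContDiffOn ℝ (⊤:ℕ∞) ρ Ω) {S : Set E} (hS : S = {p ∈ Ω | ρ p = 0})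
    {p : E} (hp : p ∈ S) (hg : grad ρ p ≠ 0) : IsRegularLevelSetAt ρ S p := by
  subst hS
  refine ⟨hp, (hρ.contDiffAt (hΩ.mem_nhds hp.1)).hasStrictFDerivAt (by simp), hg, ?_⟩
  filter_upwards [inter_mem_nhdsWithin _ (hΩ.mem_nhds hp.1)] with x hx
  exact ⟨hx.2, hx.1.trans hp.2⟩

namespace IsRegularLevelSetAt

variable {ρ : E → ℝ} {S : Set E} {p : E} {f F G : E → ℍ}

lemma fderiv_ne_zero (hp : IsRegularLevelSetAt ρ S p) : fderiv ℝ ρ p ≠ 0 := fun h0 =>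
  hp.grad_ne_zero (by simp [grad, h0])

lemma hasStrictFDerivAt_of_smoothExt (hp : IsRegularLevelSetAt ρ S p) (hF : SmoothExt S f F) :
    HasStrictFDerivAt F (fderiv ℝ F p) p := by
  obtain ⟨U, hU, hSU, hFU, -⟩ := hF
  exact (hFU.contDiffAt (hU.mem_nhds (hSU hp.mem))).hasStrictFDerivAt (by simp)

lemma fderiv_apply_eq_of_smoothExt (hp : IsRegularLevelSetAt ρ S p)
    (hF : SmoothExt S f F) (hG : SmoothExt S f G) {v : E} (hv : fderiv ℝ ρ p v = 0) :
    fderiv ℝ F p v = fderiv ℝ G p v := by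
  have hFG := (hp.hasStrictFDerivAt_of_smoothExt hF).sub (hp.hasStrictFDerivAt_of_smoothExt hG)
  obtain ⟨-, -, -, -, hFf⟩ := hF
  obtain ⟨-, -, -, -, hGf⟩ := hG
  have hconst : ∀ᶠ x in 𝓝[{x | ρ x = ρ p}] p, F x - G x = F p - G p := by
    filter_upwards [hp.eventually_mem] with x hx
    simp only [hFf hx, hGf hx, hFf hp.mem, hGf hp.mem, sub_self]
  have := HasStrictFDerivAt.apply_eq_zero_of_eventually_const_on_levelSet hp.hasStrictFDerivAt
    hp.fderiv_ne_zero hFG hconst hv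
  rwa [sub_apply, sub_eq_zero] at this

lemma perpOf_eq (hp : IsRegularLevelSetAt ρ S p) (hF : SmoothExt S f F)
    (hG : SmoothExt S f G) : perpOf ρ F p = perpOf ρ G p := by
  obtain ⟨c, hc⟩ := ContinuousLinearMap.exists_eq_add_smulRight_of_eqOn_ker
    hp.fderiv_ne_zero fun v hv => hp.fderiv_apply_eq_of_smoothExt hF hG hv
  exact perpOf_eq_of_fderiv_eq_add_smulRight hc

lemma fderiv_nu_eq_perpOf (hp : IsRegularLevelSetAt ρ S p) (hF : SmoothExt S f F)
    (hDF : dbar1 F p = 0 ∧ dbar2 F p = 0) (hG : SmoothExt S f G) :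
    fderiv ℝ F p (nu ρ p) = perpOf ρ G p := by
  rw [← hp.perpOf_eq hF hG, perpOf, Dbar, hDF.1, hDF.2, qinner]
  simp

lemma fderiv_apply_eq_tangential_add_perpOf (hp : IsRegularLevelSetAt ρ S p)
    (hF : SmoothExt S f F) (hDF : dbar1 F p = 0 ∧ dbar2 F p = 0) (hG : SmoothExt S f G)
    (w : E) : fderiv ℝ F p w = fderiv ℝ G p (w - edot w (nu ρ p) • nu ρ p)
      + edot w (nu ρ p) • perpOf ρ G p := by
  rw [← hp.fderiv_nu_eq_perpOf hF hDF hG, ← hp.fderiv_apply_eq_of_smoothExt hF hG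
    (fderiv_sub_edot_nu_smul_nu hp.grad_ne_zero w), map_sub, map_smul, sub_add_cancel]

end IsRegularLevelSetAt

theorem perp_well_defined_and_derivatives_of_crf_extension_general
    (Ω : Set E) (hΩ : IsOpen Ω)
    (ρ : E → ℝ) (hρ : ContDiffOn ℝ (⊤:ℕ∞) ρ Ω)
    (S : Set E) (hS : S = {p ∈ Ω | ρ p = 0})
    (hgrad : ∀ p ∈ S, grad ρ p ≠ 0)
    (f : E → ℍ) :
    (∀ F G, SmoothExt S f F → SmoothExt S f G →
      ∀ p ∈ S, perpOf ρ F p = perpOf ρ G p) ∧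
    (∀ F, SmoothExt S f F → (∀ p ∈ S, dbar1 F p = 0 ∧ dbar2 F p = 0) →
      ∀ G, SmoothExt S f G → ∀ p ∈ S,
        fderiv ℝ F p (nu ρ p) = perpOf ρ G p ∧
        ∀ α : Fin 4,
          fderiv ℝ F p (e1 α) = fx ρ G α p ∧ fderiv ℝ F p (e2 α) = fy ρ G α p) := by
  have hreg : ∀ p ∈ S, IsRegularLevelSetAt ρ S p := fun p hp =>
    isRegularLevelSetAt_of_mem hΩ hρ hS hp (hgrad p hp)
  refine ⟨fun F G hF hG p hp => (hreg p hp).perpOf_eq hF hG,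
    fun F hF hDF G hG p hp => ⟨(hreg p hp).fderiv_nu_eq_perpOf hF (hDF p hp) hG, fun α => ⟨?_, ?_⟩⟩⟩
  exacts [(hreg p hp).fderiv_apply_eq_tangential_add_perpOf hF (hDF p hp) hG (e1 α),
    (hreg p hp).fderiv_apply_eq_tangential_add_perpOf hF (hDF p hp) hG (e2 α)]

/-- Proposition lu12. (1) The expression
`(∂F/∂ν − ⟨ν, 𝔇̄F⟩)|_S` does not depend on the chosen smooth extension `F` of
`f`; the common value is `f^⊥`. (2) If `f` is CRF and `F` is a smooth extension
of `f` with `𝔇̄F = 0` on `S`, then `∂F/∂ν = f^⊥`, `(∂F/∂x_α)|_S = f_{(x_α)}`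
and `(∂F/∂y_α)|_S = f_{(y_α)}` for `α = 0,1,2,3`. -/
theorem perp_well_defined_and_derivatives_of_crf_extension
    (Ω : Set E) (hΩ : IsOpen Ω)
    (ρ : E → ℝ) (hρ : ContDiffOn ℝ (⊤:ℕ∞) ρ Ω)
    (S : Set E) (hS : S = {p ∈ Ω | ρ p = 0})
    (hgrad : ∀ p ∈ S, grad ρ p ≠ 0)
    (f : E → ℍ) (hf : SmoothOnS S f) :
    (∀ F G, SmoothExt S f F → SmoothExt S f G →
      ∀ p ∈ S, perpOf ρ F p = perpOf ρ G p) ∧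
    (∀ F, SmoothExt S f F → (∀ p ∈ S, dbar1 F p = 0 ∧ dbar2 F p = 0) →
      ∀ G, SmoothExt S f G → ∀ p ∈ S,
        fderiv ℝ F p (nu ρ p) = perpOf ρ G p ∧
        ∀ α : Fin 4,
          fderiv ℝ F p (e1 α) = fx ρ G α p ∧ fderiv ℝ F p (e2 α) = fy ρ G α p) :=
  perp_well_defined_and_derivatives_of_crf_extension_general Ω hΩ ρ hρ S hS hgrad f
end
end

section
/- Let S = {(q₁,q₂) ∈ ℍ² : y₃ = 0}, with defining function ρ = y₃, and define f : S → ℍ by f = −x₁y₀·j + x₀y₀·k. Then f is a CRF function, f^⊥ = f_{(y₃)} = −x₀ + x₁·i, and f_{(y₃)} is not CRF (one has ∂G/∂q̄₁ = −2 ≠ 0 for any smooth extension G of f_{(y₃)} on S). Hence f is a CRF function which is not admissible. -/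
/-!
Quaternionic analysis in two variables: the Cauchy–Riemann–Fueter operator,
CRF functions and admissible functions on a hypersurface `S ⊂ ℍ²`.
-/

noncomputable section

open Set

/-- The quaternions. -/
local notation "ℍ" => Quaternion ℝ

/-!
Every smooth extension of `f` has the same derivatives as `f` along `S = {y₃ = 0}`. With
`ν = (0, k)` the `∂/∂y₃`-terms cancel in `f^⊥ = ∂F/∂y₃ − k̄ ∂F/∂q̄₂` (as `k̄ k = 1`), leaving
`f^⊥ = k (∂/∂y₀ + i ∂/∂y₁ + j ∂/∂y₂) f = k (x₀ k − x₁ j) = −x₀ + x₁ i = g`, which is also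
`f_{(y₃)}` because `∂/∂y₃ = ν`. Since `∂G/∂q̄₁` only involves derivatives along `S`, every
extension `G` of `g` has `∂G/∂q̄₁ = −1 + i·i = −2` on `S`, so `g` is not CRF. On the other hand
`f + y₃ g` is an extension of `f` annihilated by `𝔇̄` on `S`.
-/

section FDeriv

variable {𝕜 : Type*} [NontriviallyNormedField 𝕜]
  {V : Type*} [NormedAddCommGroup V] [NormedSpace 𝕜 V]
  {W : Type*} [NormedAddCommGroup W] [NormedSpace 𝕜 W]

theorem fderiv_apply_eq_of_eq_on_line {f g : V → W} {p v : V}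
    (hf : DifferentiableAt 𝕜 f p) (hg : DifferentiableAt 𝕜 g p)
    (hfg : ∀ t : 𝕜, f (p + t • v) = g (p + t • v)) :
    fderiv 𝕜 f p v = fderiv 𝕜 g p v := by
  rw [← hf.lineDeriv_eq_fderiv, ← hg.lineDeriv_eq_fderiv, lineDeriv, lineDeriv, funext hfg]

theorem fderiv_clm_smul_clm_apply (φ : V →L[𝕜] 𝕜) (L : V →L[𝕜] W) (p v : V) :
    fderiv 𝕜 (fun q => φ q • L q) p v = φ p • L v + φ v • L p := by
  change fderiv 𝕜 (⇑φ • ⇑L) p v = _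
  rw [(φ.hasFDerivAt.smul L.hasFDerivAt).fderiv]
  simp

end FDeriv

theorem SmoothExt.differentiableAt {S : Set E} {f F : E → ℍ} (hF : SmoothExt S f F)
    {p : E} (hp : p ∈ S) : DifferentiableAt ℝ F p := by
  obtain ⟨U, hU, hSU, hsmooth, -⟩ := hF
  exact (hsmooth.differentiableOn (by simp)).differentiableAt (hU.mem_nhds (hSU hp))

theorem SmoothExt.fderiv_apply_eq {S : Set E} {f F : E → ℍ} (hF : SmoothExt S f F)
    {p v : E} (hp : p ∈ S) (hf : DifferentiableAt ℝ f p) (hline : ∀ t : ℝ, p + t • v ∈ S) :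
    fderiv ℝ F p v = fderiv ℝ f p v :=
  fderiv_apply_eq_of_eq_on_line (hF.differentiableAt hp) hf
    fun t => hF.choose_spec.2.2.2 (hline t)

theorem IsCRF.congr {S : Set E} {f g : E → ℍ} (hf : IsCRF S f) (hfg : EqOn f g S) :
    IsCRF S g := by
  obtain ⟨F, ⟨U, hU, hSU, hsmooth, hFf⟩, hdbar⟩ := hf
  exact ⟨F, ⟨U, hU, hSU, hsmooth, fun p hp => (hFf hp).trans (hfg hp)⟩, hdbar⟩

namespace CRFCounterexample

attribute [local simp] Quaternion.re_zero Quaternion.imI_zero Quaternion.imJ_zero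
  Quaternion.imK_zero Quaternion.re_one Quaternion.imI_one Quaternion.imJ_one Quaternion.imK_one

@[simp] theorem e_zero : e 0 = 1 := rfl

@[simp] theorem e_one_coords : (e 1).re = 0 ∧ (e 1).imI = 1 ∧ (e 1).imJ = 0 ∧ (e 1).imK = 0 :=
  ⟨rfl, rfl, rfl, rfl⟩

@[simp] theorem e_two_coords : (e 2).re = 0 ∧ (e 2).imI = 0 ∧ (e 2).imJ = 1 ∧ (e 2).imK = 0 :=
  ⟨rfl, rfl, rfl, rfl⟩

@[simp] theorem e_three_coords : (e 3).re = 0 ∧ (e 3).imI = 0 ∧ (e 3).imJ = 0 ∧ (e 3).imK = 1 :=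
  ⟨rfl, rfl, rfl, rfl⟩

def reCLM : ℍ →L[ℝ] ℝ := ⟨QuaternionAlgebra.reₗ _ _ _, Quaternion.continuous_re⟩
def imICLM : ℍ →L[ℝ] ℝ := ⟨QuaternionAlgebra.imIₗ _ _ _, Quaternion.continuous_imI⟩
def imKCLM : ℍ →L[ℝ] ℝ := ⟨QuaternionAlgebra.imKₗ _ _ _, Quaternion.continuous_imK⟩

def x0 : E →L[ℝ] ℝ := reCLM.comp (ContinuousLinearMap.fst ℝ ℍ ℍ)
def x1 : E →L[ℝ] ℝ := imICLM.comp (ContinuousLinearMap.fst ℝ ℍ ℍ)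
def y0 : E →L[ℝ] ℝ := reCLM.comp (ContinuousLinearMap.snd ℝ ℍ ℍ)
def y3 : E →L[ℝ] ℝ := imKCLM.comp (ContinuousLinearMap.snd ℝ ℍ ℍ)

@[simp] theorem x0_apply (p : E) : x0 p = p.1.re := rfl
@[simp] theorem x1_apply (p : E) : x1 p = p.1.imI := rfl
@[simp] theorem y0_apply (p : E) : y0 p = p.2.re := rfl
@[simp] theorem y3_apply (p : E) : y3 p = p.2.imK := rfl

def ρ₀ : E → ℝ := fun p => p.2.imK
def S₀ : Set E := {p | p.2.imK = 0}

theorem add_smul_mem_S₀ {p v : E} (hp : p ∈ S₀) (hv : v.2.imK = 0) (t : ℝ) :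
    p + t • v ∈ S₀ := by
  simp [S₀, show p.2.imK = 0 from hp, hv]

theorem grad_ρ₀ (p : E) : grad ρ₀ p = e2 3 := by
  rw [grad, show ρ₀ = ⇑y3 from rfl, y3.fderiv]
  ext <;> simp [Fin.sum_univ_four, e1, e2]

theorem edot_e2_three_self : edot (e2 3) (e2 3) = 1 := by
  simp [edot, qdot, e2]

theorem nu_ρ₀ (p : E) : nu ρ₀ p = e2 3 := by
  rw [nu, grad_ρ₀, edot_e2_three_self, Real.sqrt_one, inv_one, one_smul]

theorem perpOf_ρ₀ (F : E → ℍ) (p : E) :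
    perpOf ρ₀ F p = e 3 * (fderiv ℝ F p (e2 0) + e 1 * fderiv ℝ F p (e2 1)
      + e 2 * fderiv ℝ F p (e2 2)) := by
  have hk : star (e 3) = -e 3 := by ext <;> simp
  have hkk : e 3 * e 3 = -1 := by ext <;> simp
  rw [perpOf, nu_ρ₀]
  simp only [qinner, Dbar, dbar2, e2, Fin.sum_univ_four, star_zero, zero_mul, zero_add, hk]
  simp only [neg_mul, mul_add, ← mul_assoc, hkk, e_zero, one_mul]
  abel

theorem fy_ρ₀_three (F : E → ℍ) (p : E) : fy ρ₀ F 3 p = perpOf ρ₀ F p := by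
  rw [fy, nu_ρ₀, edot_e2_three_self, one_smul, one_smul, sub_self, map_zero, zero_add]

def gLin : E →L[ℝ] ℍ := x1.smulRight (e 1) - x0.smulRight 1

def fLin : E →L[ℝ] ℍ := x0.smulRight (e 3) - x1.smulRight (e 2)

@[simp] theorem gLin_apply (p : E) : gLin p = p.1.imI • e 1 - p.1.re • 1 := rfl

@[simp] theorem fLin_apply (p : E) : fLin p = p.1.re • e 3 - p.1.imI • e 2 := rfl

theorem e3_mul_fLin (p : E) : e 3 * fLin p = gLin p := by
  ext <;> simp

theorem fLin_add_e3_mul_gLin (p : E) : fLin p + e 3 * gLin p = 0 := by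
  ext <;> simp

theorem sum_e_mul_fLin_e1 : ∑ α, e α * fLin (e1 α) = 0 := by
  ext <;> simp [Fin.sum_univ_four, e1]

theorem sum_e_mul_gLin_e1 : ∑ α, e α * gLin (e1 α) = -2 := by
  rw [show (-2 : ℍ) = -(1 + 1) by norm_num]
  ext <;> simp [Fin.sum_univ_four, e1]

theorem f_eq_y0_smul_fLin :
    (fun p : E => (-(p.1.imI * p.2.re)) • e 2 + (p.1.re * p.2.re) • e 3)
      = fun p => y0 p • fLin p := by
  funext p
  ext <;> simp <;> ring

theorem g_eq_gLin : (fun p : E => -((p.1.re : ℍ)) + p.1.imI • e 1) = ⇑gLin := by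
  funext p
  ext <;> simp

def fExt : E → ℍ := fun p => y0 p • fLin p + y3 p • gLin p

theorem smoothExt_fExt : SmoothExt S₀ (fun p => y0 p • fLin p) fExt := by
  refine ⟨univ, isOpen_univ, subset_univ _, ContDiff.contDiffOn (by unfold fExt; fun_prop), ?_⟩
  intro p hp
  simp [fExt, show p.2.imK = 0 from hp]

theorem fderiv_fExt_apply (p v : E) :
    fderiv ℝ fExt p v = y0 p • fLin v + y0 v • fLin p + (y3 p • gLin v + y3 v • gLin p) := by
  unfold fExt
  rw [fderiv_fun_add (by fun_prop) (by fun_prop), add_apply, fderiv_clm_smul_clm_apply,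
    fderiv_clm_smul_clm_apply]

theorem dbar1_fExt {p : E} (hp : p ∈ S₀) : dbar1 fExt p = 0 := by
  calc dbar1 fExt p = y0 p • ∑ α, e α * fLin (e1 α) := by
        simp [dbar1, fderiv_fExt_apply, e1, show p.2.imK = 0 from hp, Finset.smul_sum]
    _ = 0 := by rw [sum_e_mul_fLin_e1, smul_zero]

theorem dbar2_fExt (p : E) : dbar2 fExt p = 0 := by
  calc dbar2 fExt p = fLin p + e 3 * gLin p := by
        simp [dbar2, fderiv_fExt_apply, e2, Fin.sum_univ_four]
    _ = 0 := fLin_add_e3_mul_gLin p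

theorem isCRF_f : IsCRF S₀ (fun p => y0 p • fLin p) :=
  ⟨fExt, smoothExt_fExt, fun _ hp => ⟨dbar1_fExt hp, dbar2_fExt _⟩⟩

theorem perpOf_eq_gLin {F : E → ℍ} (hF : SmoothExt S₀ (fun p => y0 p • fLin p) F)
    {p : E} (hp : p ∈ S₀) : perpOf ρ₀ F p = gLin p := by
  have htangent (α : Fin 4) (hα : (e α).imK = 0) :
      fderiv ℝ F p (e2 α) = y0 (e2 α) • fLin p := by
    rw [hF.fderiv_apply_eq hp (by fun_prop) (add_smul_mem_S₀ hp (by simpa [e2] using hα)),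
      fderiv_clm_smul_clm_apply]
    simp [e2]
  rw [perpOf_ρ₀, htangent 0 rfl, htangent 1 rfl, htangent 2 rfl]
  simpa [e2] using e3_mul_fLin p

theorem dbar1_eq_neg_two {G : E → ℍ} (hG : SmoothExt S₀ gLin G) {p : E} (hp : p ∈ S₀) :
    dbar1 G p = -2 := by
  have htangent (α : Fin 4) : fderiv ℝ G p (e1 α) = gLin (e1 α) := by
    rw [hG.fderiv_apply_eq hp gLin.differentiableAt (add_smul_mem_S₀ hp (by simp [e1])),
      gLin.fderiv]
  simp only [dbar1, htangent, sum_e_mul_gLin_e1]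

theorem not_isCRF_gLin : ¬ IsCRF S₀ gLin := by
  rintro ⟨G, hG, hdbar⟩
  have h0 : (0 : E) ∈ S₀ := by simp [S₀]
  have hre : (dbar1 G 0).re = -2 := by rw [dbar1_eq_neg_two hG h0]; rfl
  rw [(hdbar 0 h0).1] at hre
  norm_num at hre

theorem not_admissible_f : ¬ Admissible ρ₀ S₀ (fun p => y0 p • fLin p) := by
  rintro ⟨-, hall⟩
  refine not_isCRF_gLin ((hall fExt smoothExt_fExt 3).2.congr fun p hp => ?_)
  rw [fy_ρ₀_three, perpOf_eq_gLin smoothExt_fExt hp]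

end CRFCounterexample

open CRFCounterexample

/-- the counterexample. On `S = {y₃ = 0}` with defining
function `ρ = y₃`, the function `f = −x₁y₀j + x₀y₀k` is CRF, with
`f^⊥ = f_{(y₃)} = −x₀ + x₁i` on `S`; every smooth extension `G` of `f_{(y₃)}`
has `∂G/∂q̄₁ = −2` on `S`, so `f_{(y₃)}` is not CRF; hence `f` is a CRF
function which is not admissible. -/
theorem crf_not_admissible_example
    (ρ : E → ℝ) (hρ : ρ = fun p => p.2.imK)
    (S : Set E) (hS : S = {p : E | p.2.imK = 0})
    (f : E → ℍ)
    (hf : f = fun p => (-(p.1.imI * p.2.re)) • e 2 + (p.1.re * p.2.re) • e 3)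
    (g : E → ℍ) (hg : g = fun p => -((p.1.re : ℍ)) + p.1.imI • e 1) :
    IsCRF S f ∧
    (∀ F, SmoothExt S f F → ∀ p ∈ S, perpOf ρ F p = g p ∧ fy ρ F 3 p = g p) ∧
    (∀ G, SmoothExt S g G → ∀ p ∈ S, dbar1 G p = -2) ∧
    ¬ IsCRF S g ∧
    ¬ Admissible ρ S f := by
  subst hρ hS
  obtain rfl : f = fun p => y0 p • fLin p := hf.trans f_eq_y0_smul_fLin
  obtain rfl : g = gLin := hg.trans g_eq_gLin
  refine ⟨isCRF_f, fun F hF p hp => ?_, fun G hG p hp => dbar1_eq_neg_two hG hp,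
    not_isCRF_gLin, not_admissible_f⟩
  exact ⟨perpOf_eq_gLin hF hp, (fy_ρ₀_three F p).trans (perpOf_eq_gLin hF hp)⟩
end
end
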